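/- Let d be an admissible ultra-metric on X̄ = X ∪ X⁻¹ ∪ {e} that in addition satisfies d(x⁻¹,y) = d(x,y⁻¹) = max{d(x,e), d(y,e)} for all x,y ∈ X. Then the Graev ultra-metric δ_u is maximal among all invariant ultra-metrics on the free group F(X) that extend the metric d defined on X ∪ {e}: if R is any invariant ultra-metric on F(X) with R(a,b) = d(a,b) for all a,b ∈ X ∪ {e}, then R(v,w) ≤ δ_u(v,w) for all v,w ∈ F(X). -/
import Mathlib


/-! Graev ultra-metrics on free groups (after Gao, Savchenko–Zarichnyi and
Shlossberg, "On Graev type ultra-metrics"). -/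

namespace GraevStmt

variable {X : Type*}

/-- The alphabet `X̄ = X ∪ X⁻¹ ∪ {e}`: `none` is the letter `e`,
`some (x, true)` is the letter `x` and `some (x, false)` is the letter `x⁻¹`. -/
abbrev Letter (X : Type*) := Option (X × Bool)

/-- The letter `e`. -/
def eL : Letter X := none

/-- The letter `x`, for `x ∈ X`. -/
def pos (x : X) : Letter X := some (x, true)

/-- The letter `x⁻¹`, for `x ∈ X`. -/
def neg (x : X) : Letter X := some (x, false)

/-- The formal inverse of a letter; `e⁻¹ = e` and `(x⁻¹)⁻¹ = x`. -/
def linv : Letter X → Letter X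
  | none => none
  | some (x, b) => some (x, !b)

/-- Interpretation of a letter as an element of the free group `F(X)`. -/
def toF : Letter X → FreeGroup X
  | none => 1
  | some (x, b) => FreeGroup.mk [(x, b)]

/-- The reduced word of a word `w ∈ W(X)` over the alphabet `X̄`, viewed as the
corresponding element of the free group `F(X)`. -/
def red (w : List (Letter X)) : FreeGroup X := (w.map toF).prod

/-- The canonical irreducible word over the alphabet `X̄` representing a given
element of the free group `F(X)`. -/
def wordOf [DecidableEq X] (w : FreeGroup X) : List (Letter X) :=
  w.toWord.map some

/-- `ρ_u(w, v)`: the maximum of the distances between corresponding letters of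
two words of equal length. -/
def rho (d : Letter X → Letter X → ℝ) (w v : List (Letter X)) : ℝ :=
  (List.zipWith d w v).foldr max 0

/-- The Graev ultra-metric `δ_u` on `F(X)` associated with `d`:
`δ_u(w, v) = inf {ρ_u(w*, v*) : lh(w*) = lh(v*), (w*)' = w, (v*)' = v}`. -/
noncomputable def graev (d : Letter X → Letter X → ℝ) (w v : FreeGroup X) : ℝ :=
  sInf {r : ℝ | ∃ w' v' : List (Letter X), w'.length = v'.length ∧
    red w' = w ∧ red v' = v ∧ r = rho d w' v'}

/-- `d` is an ultra-metric: symmetric, vanishing exactly on the diagonal and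
satisfying the strong triangle inequality. -/
def IsUltraMetric {A : Type*} (d : A → A → ℝ) : Prop :=
  (∀ a b, d a b = d b a) ∧ (∀ a b, d a b = 0 ↔ a = b) ∧
    ∀ a b c, d a c ≤ max (d a b) (d b c)

/-- An admissible ultra-metric on the alphabet `X̄`, i.e. an ultra-metric with
`d(x⁻¹, y⁻¹) = d(x, y)`, `d(x, e) = d(x⁻¹, e)` and `d(x⁻¹, y) = d(x, y⁻¹)`. -/
def IsAdmissible (d : Letter X → Letter X → ℝ) : Prop :=
  IsUltraMetric d ∧ (∀ x y : X, d (neg x) (neg y) = d (pos x) (pos y)) ∧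
    (∀ x : X, d (pos x) eL = d (neg x) eL) ∧
    ∀ x y : X, d (neg x) (pos y) = d (pos x) (neg y)

/-- A function `R` on `F(X) × F(X)` is (two-sided) invariant if
`R(uwv, uw'v) = R(w, w')` for all `u, v, w, w'`. -/
def IsInvariant (R : FreeGroup X → FreeGroup X → ℝ) : Prop :=
  ∀ u v w w' : FreeGroup X, R (u * w * v) (u * w' * v) = R w w'

/-- A match on `{0, …, n-1}`: an involution `θ` such that there are no
`i < j < θ(i) < θ(j)`. -/
def IsMatch {n : ℕ} (θ : Fin n → Fin n) : Prop :=
  (∀ i, θ (θ i) = i) ∧ ∀ i j : Fin n, ¬(i < j ∧ j < θ i ∧ θ i < θ j)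

/-- The word `w^θ` associated with a word `w` and a match `θ`:
its `i`-th letter is `x_i` if `θ(i) > i`, `e` if `θ(i) = i`, and
`x_{θ(i)}⁻¹` if `θ(i) < i`. -/
def matchWord (w : List (Letter X)) (θ : Fin w.length → Fin w.length) :
    List (Letter X) :=
  List.ofFn fun i => if i < θ i then w.get i
    else if θ i = i then eL else linv (w.get (θ i))

/-- `j₂(x, y) = x⁻¹y`. -/
def j2 (p : X × X) : FreeGroup X := (FreeGroup.of p.1)⁻¹ * FreeGroup.of p.2

/-- `j₂*(x, y) = xy⁻¹`. -/
def j2s (p : X × X) : FreeGroup X := FreeGroup.of p.1 * (FreeGroup.of p.2)⁻¹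

/-- `ε̃ = ⋃_{w ∈ F(X)} w (j₂(ε) ∪ j₂*(ε)) w⁻¹` for `ε ⊆ X × X`. -/
def tilde (S : Set (X × X)) : Set (FreeGroup X) :=
  ⋃ w : FreeGroup X, (fun g => w * g * w⁻¹) '' (j2 '' S ∪ j2s '' S)

/-- The extension of an ultra-metric `d` on `X` to the alphabet `X̄` determined
by a base point `x₀`: `d(x, e) = max {d(x, x₀), 1}`, `d(x⁻¹, y⁻¹) = d(x, y)`
and `d(x⁻¹, y) = d(x, y⁻¹) = max {d(x, e), d(y, e)}` for `x, y ∈ X ∪ {e}`. -/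
def ext (d : X → X → ℝ) (x₀ : X) : Letter X → Letter X → ℝ
  | none, none => 0
  | some (x, _), none => max (d x x₀) 1
  | none, some (y, _) => max (d y x₀) 1
  | some (x, true), some (y, true) => d x y
  | some (x, false), some (y, false) => d x y
  | some (x, _), some (y, _) => max (max (d x x₀) 1) (max (d y x₀) 1)

/-- The extension of an ultra-metric `d` of diameter at most `1` on `X` to the
alphabet `X̄`, with `d(x⁻¹, y⁻¹) = d(x, y)` and
`d(x⁻¹, y) = d(x, y⁻¹) = d(x, e) = d(x⁻¹, e) = 1`. -/
def extOne (d : X → X → ℝ) : Letter X → Letter X → ℝ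
  | none, none => 0
  | some (x, true), some (y, true) => d x y
  | some (x, false), some (y, false) => d x y
  | _, _ => 1

/-- The homomorphism `α : F(X) → ℤ` extending the constant map `X → {1} ⊆ ℤ`. -/
def alpha (w : FreeGroup X) : ℤ :=
  Multiplicative.toAdd ((FreeGroup.lift fun _ : X => Multiplicative.ofAdd (1 : ℤ)) w)

/-- `F(q_r) : F(X) → F(X/F_r)`, where `X/F_r` is the quotient of `X` by the
partition into open balls of radius `r` (for an ultra-metric the relation
`d x y < r` is an equivalence relation, so `Quot` of this relation is exactly
this quotient) and `q_r` is the quotient map. -/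
def Fq (d : X → X → ℝ) (r : ℝ) :
    FreeGroup X →* FreeGroup (Quot fun x y : X => d x y < r) :=
  FreeGroup.map (Quot.mk _)

/-- The Savchenko–Zarichnyi function `d̂` on `F(X) × F(X)`:
`d̂(v, w) = 1` if `α(v) ≠ α(w)`, and
`d̂(v, w) = inf {r > 0 : F(q_r)(v) = F(q_r)(w)}` if `α(v) = α(w)`. -/
noncomputable def dHat (d : X → X → ℝ) (v w : FreeGroup X) : ℝ :=
  if alpha v = alpha w then sInf {r : ℝ | 0 < r ∧ Fq d r v = Fq d r w} else 1

lemma red_cons (a : Letter X) (l : List (Letter X)) :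
    red (a :: l) = toF a * red l := by
  simp [red]

lemma red_append (l₁ l₂ : List (Letter X)) :
    red (l₁ ++ l₂) = red l₁ * red l₂ := by
  simp [red]

lemma red_replicate (k : ℕ) : red (List.replicate k (eL : Letter X)) = 1 := by
  induction k with
  | zero => simp [red]
  | succ n ih => rw [List.replicate_succ, red_cons, ih]; simp [toF, eL]

lemma red_map_some (L : List (X × Bool)) : red (L.map some) = FreeGroup.mk L := by
  induction L with
  | nil =>
    simp [red]
    rfl
  | cons a L ih =>
    rw [List.map_cons, red_cons, ih]
    show FreeGroup.mk [a] * FreeGroup.mk L = _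
    rw [FreeGroup.mul_mk]
    rfl

lemma red_wordOf [DecidableEq X] (v : FreeGroup X) : red (wordOf v) = v := by
  rw [wordOf, red_map_some, FreeGroup.mk_toWord]

lemma mk_single_false (x : X) :
    FreeGroup.mk [(x, false)] = (FreeGroup.of x)⁻¹ := by
  rw [show (FreeGroup.of x : FreeGroup X) = FreeGroup.mk [(x, true)] from rfl,
    FreeGroup.inv_mk]
  rfl

lemma rho_cons (d : Letter X → Letter X → ℝ) (a b : Letter X)
    (l m : List (Letter X)) :
    rho d (a :: l) (b :: m) = max (d a b) (rho d l m) := by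
  simp [rho]

/-- Theorem `grau` (b): if moreover
`d(x⁻¹, y) = d(x, y⁻¹) = max {d(x, e), d(y, e)}`, then the Graev ultra-metric
`δ_u` is maximal among all invariant ultra-metrics on `F(X)` extending the
metric `d` defined on `X ∪ {e}`. -/
theorem graev_maximal_extending_XunionE {X : Type*} [Nonempty X]
    (d : Letter X → Letter X → ℝ) (hd : IsAdmissible d)
    (hmax : ∀ x y : X,
      d (neg x) (pos y) = max (d (pos x) eL) (d (pos y) eL) ∧
      d (pos x) (neg y) = max (d (pos x) eL) (d (pos y) eL))
    (R : FreeGroup X → FreeGroup X → ℝ) (hRu : IsUltraMetric R)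
    (hRi : IsInvariant R)
    (hRe : ∀ a b : Letter X, (a = eL ∨ ∃ x : X, a = pos x) →
      (b = eL ∨ ∃ x : X, b = pos x) → R (toF a) (toF b) = d a b) :
    ∀ v w : FreeGroup X, R v w ≤ graev d v w := by
  classical
  obtain ⟨hRsymm, hRzero, hRtri⟩ := hRu
  obtain ⟨⟨hdsymm, hdzero, hdtri⟩, hdnn, hdne, hdnp⟩ := hd
  -- R vanishes on the diagonal
  have hR11 : ∀ g : FreeGroup X, R g g = 0 := fun g => (hRzero g g).2 rfl
  -- key letterwise bound
  have key : ∀ a b : Letter X, R (toF a) (toF b) ≤ d a b := by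
    have hposE : ∀ x : X, R (FreeGroup.of x) 1 = d (pos x) eL := fun x =>
      hRe (pos x) eL (Or.inr ⟨x, rfl⟩) (Or.inl rfl)
    have hnegE : ∀ x : X, R (FreeGroup.of x)⁻¹ 1 = d (pos x) eL := by
      intro x
      have h := hRi (FreeGroup.of x)⁻¹ 1 (FreeGroup.of x) 1
      simp at h
      rw [hRsymm, h]
      exact hposE x
    rintro (_ | ⟨x, (_ | _)⟩) (_ | ⟨y, (_ | _)⟩)
    · -- e, e
      exact le_of_eq (hRe eL eL (Or.inl rfl) (Or.inl rfl))
    · -- e, y⁻¹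
      show R 1 (FreeGroup.mk [(y, false)]) ≤ d eL (neg y)
      rw [mk_single_false, hRsymm, hnegE y, hdne y, hdsymm]
    · -- e, y
      exact le_of_eq (hRe eL (pos y) (Or.inl rfl) (Or.inr ⟨y, rfl⟩))
    · -- x⁻¹, e
      show R (FreeGroup.mk [(x, false)]) 1 ≤ d (neg x) eL
      rw [mk_single_false, hnegE x, hdne x]
    · -- x⁻¹, y⁻¹
      show R (FreeGroup.mk [(x, false)]) (FreeGroup.mk [(y, false)]) ≤
        d (neg x) (neg y)
      rw [mk_single_false, mk_single_false, hdnn]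
      have h := hRi (FreeGroup.of x)⁻¹ (FreeGroup.of y)⁻¹
        (FreeGroup.of y) (FreeGroup.of x)
      simp at h
      rw [h, hRsymm]
      exact le_of_eq (hRe (pos x) (pos y) (Or.inr ⟨x, rfl⟩) (Or.inr ⟨y, rfl⟩))
    · -- x⁻¹, y
      show R (FreeGroup.mk [(x, false)]) (FreeGroup.mk [(y, true)]) ≤
        d (neg x) (pos y)
      rw [(hmax x y).1, mk_single_false]
      calc R (FreeGroup.of x)⁻¹ (FreeGroup.mk [(y, true)])
          ≤ max (R (FreeGroup.of x)⁻¹ 1) (R 1 (FreeGroup.mk [(y, true)])) :=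
            hRtri _ _ _
        _ ≤ _ := by
            apply max_le_max (le_of_eq (hnegE x))
            rw [hRsymm]
            exact le_of_eq (hRe (pos y) eL (Or.inr ⟨y, rfl⟩) (Or.inl rfl))
    · -- x, e
      exact le_of_eq (hRe (pos x) eL (Or.inr ⟨x, rfl⟩) (Or.inl rfl))
    · -- x, y⁻¹
      show R (FreeGroup.mk [(x, true)]) (FreeGroup.mk [(y, false)]) ≤
        d (pos x) (neg y)
      rw [(hmax x y).2, mk_single_false]
      calc R (FreeGroup.mk [(x, true)]) (FreeGroup.of y)⁻¹
          ≤ max (R (FreeGroup.mk [(x, true)]) 1) (R 1 (FreeGroup.of y)⁻¹) :=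
            hRtri _ _ _
        _ ≤ _ := by
            apply max_le_max
              (le_of_eq (hRe (pos x) eL (Or.inr ⟨x, rfl⟩) (Or.inl rfl)))
            rw [hRsymm]
            exact le_of_eq (hnegE y)
    · -- x, y
      exact le_of_eq (hRe (pos x) (pos y) (Or.inr ⟨x, rfl⟩) (Or.inr ⟨y, rfl⟩))
  -- bound for words of equal length
  have words : ∀ w' v' : List (Letter X), w'.length = v'.length →
      R (red w') (red v') ≤ rho d w' v' := by
    intro w'
    induction w' with
    | nil =>
      intro v' hlen
      rw [List.length_nil, eq_comm, List.length_eq_zero_iff] at hlen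
      subst hlen
      simp [rho, red, hR11]
    | cons a l ih =>
      rintro (_ | ⟨b, m⟩) hlen
      · simp at hlen
      · simp only [List.length_cons, Nat.succ.injEq] at hlen
        have h1 : R (red (a :: l)) (red (a :: m)) = R (red l) (red m) := by
          rw [red_cons, red_cons]
          have := hRi (toF a) 1 (red l) (red m)
          simpa using this
        have h2 : R (red (a :: m)) (red (b :: m)) = R (toF a) (toF b) := by
          rw [red_cons, red_cons]
          have := hRi 1 (red m) (toF a) (toF b)
          simpa [mul_assoc] using this
        calc R (red (a :: l)) (red (b :: m))
            ≤ max (R (red (a :: l)) (red (a :: m)))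
                (R (red (a :: m)) (red (b :: m))) := hRtri _ _ _
          _ ≤ max (rho d l m) (d a b) := by
              rw [h1, h2]
              exact max_le_max (ih m hlen) (key a b)
          _ ≤ rho d (a :: l) (b :: m) :=
              le_of_eq (by rw [rho_cons, max_comm])
  intro v w
  apply le_csInf
  · -- nonempty
    refine ⟨rho d (wordOf v ++ List.replicate (wordOf w).length eL)
        (wordOf w ++ List.replicate (wordOf v).length eL),
      wordOf v ++ List.replicate (wordOf w).length eL,
      wordOf w ++ List.replicate (wordOf v).length eL, ?_, ?_, ?_, rfl⟩
    · simp [Nat.add_comm]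
    · rw [red_append, red_replicate, red_wordOf, mul_one]
    · rw [red_append, red_replicate, red_wordOf, mul_one]
  · rintro r ⟨w', v', hlen, hw, hv, rfl⟩
    rw [← hw, ← hv]
    exact words w' v' hlen

end GraevStmt
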